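/- arXiv:1109.5152 — 2 statements merged into one kernel-verified Lean document; each statement's English description precedes it below -/
import Mathlib

section
/- Let 2 ≤ p ≤ q be real numbers and let x, y be nonnegative real sequences in ℓ^p. Then ‖x+y‖_p^q + ‖x−y‖_p^q ≥ 2(‖x‖_p^q + ‖y‖_p^q). -/
open Real

lemma aux1 {a b r : ℝ} (ha : 0 ≤ a) (hb : 0 ≤ b) (hr : 1 ≤ r) :
    a ^ r + b ^ r ≤ (a + b) ^ r := by
  lift a to NNReal using ha
  lift b to NNReal using hb
  exact_mod_cast NNReal.add_rpow_le_rpow_add a b hr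

lemma aux2 {a b r : ℝ} (ha : 0 ≤ a) (hb : 0 ≤ b) (hr : 1 ≤ r) :
    2 * (((a + b) / 2) ^ r) ≤ a ^ r + b ^ r := by
  lift a to NNReal using ha
  lift b to NNReal using hb
  have := NNReal.rpow_arith_mean_le_arith_mean2_rpow (1/2) (1/2) a b (add_halves 1) hr
  have h2 : ((1/2 : NNReal) * a + (1/2) * b) ^ r ≤ (1/2) * a ^ r + (1/2) * b ^ r := this
  have := (NNReal.coe_le_coe.2 h2)
  push_cast at this
  rw [show (1/2*(a:ℝ)+1/2*b) = (a+b)/2 by ring] at this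
  linarith

lemma key {a b c d r : ℝ} (ha : 0 ≤ a) (hb : 0 ≤ b) (hc : 0 ≤ c) (hd : 0 ≤ d)
    (hr : 1 ≤ r) (h : 2 * (c + d) ≤ a + b) :
    2 * (c ^ r + d ^ r) ≤ a ^ r + b ^ r := by
  have h1 : c ^ r + d ^ r ≤ (c + d) ^ r := aux1 hc hd hr
  have h2 : (c + d) ^ r ≤ ((a + b) / 2) ^ r :=
    Real.rpow_le_rpow (by linarith) (by linarith) (by linarith)
  have h3 := aux2 ha hb hr
  linarith

lemma pointwise {a b p : ℝ} (ha : 0 ≤ a) (hb : 0 ≤ b) (hp : 2 ≤ p) :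
    2 * (a ^ p + b ^ p) ≤ (a + b) ^ p + |a - b| ^ p := by
  have hr : (1:ℝ) ≤ p / 2 := by linarith
  have e : ∀ t : ℝ, (t^2) ^ (p/2) = |t| ^ p := by
    intro t
    rw [show t^2 = |t|^2 by rw [sq_abs], ← Real.rpow_natCast |t| 2,
      ← Real.rpow_mul (abs_nonneg t)]
    congr 1; push_cast; ring
  have hkey := key (a := (a+b)^2) (b := (a-b)^2) (c := a^2) (d := b^2)
    (by positivity) (by positivity) (by positivity) (by positivity) hr (by nlinarith)
  rw [e, e, e, e] at hkey
  rw [abs_of_nonneg ha, abs_of_nonneg hb, abs_of_nonneg (by linarith : 0 ≤ a + b)] at hkey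
  exact hkey

theorem stmt8 (p q : ℝ) (hp : 2 ≤ p) (hpq : p ≤ q) (x y : ℕ → ℝ)
    (hx0 : ∀ n, 0 ≤ x n) (hy0 : ∀ n, 0 ≤ y n)
    (hx : Summable fun n => x n ^ p) (hy : Summable fun n => y n ^ p) :
    ((∑' n, |x n + y n| ^ p) ^ (1 / p)) ^ q + ((∑' n, |x n - y n| ^ p) ^ (1 / p)) ^ q ≥
      2 * (((∑' n, |x n| ^ p) ^ (1 / p)) ^ q + ((∑' n, |y n| ^ p) ^ (1 / p)) ^ q) := by
  have hp0 : (0:ℝ) < p := by linarith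
  -- bounds for summability
  have hb : ∀ (f : ℕ → ℝ), (∀ n, |f n| ≤ x n + y n) →
      ∀ n, |f n| ^ p ≤ 2 ^ p * (x n ^ p + y n ^ p) := by
    intro f hf n
    have h1 : |f n| ≤ 2 * max (x n) (y n) := by
      refine (hf n).trans ?_
      have := le_max_left (x n) (y n)
      have := le_max_right (x n) (y n)
      linarith
    have h2 : |f n| ^ p ≤ (2 * max (x n) (y n)) ^ p :=
      Real.rpow_le_rpow (abs_nonneg _) h1 (by linarith)
    have h3 : (2 * max (x n) (y n)) ^ p = 2 ^ p * max (x n) (y n) ^ p :=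
      Real.mul_rpow (by norm_num) (le_max_of_le_left (hx0 n))
    have h4 : max (x n) (y n) ^ p ≤ x n ^ p + y n ^ p := by
      rcases max_cases (x n) (y n) with ⟨h, _⟩ | ⟨h, _⟩ <;> rw [h]
      · nlinarith [Real.rpow_nonneg (hy0 n) p]
      · nlinarith [Real.rpow_nonneg (hx0 n) p]
    calc |f n| ^ p ≤ 2 ^ p * max (x n) (y n) ^ p := by rw [← h3]; exact h2
      _ ≤ 2 ^ p * (x n ^ p + y n ^ p) := by
          have : (0:ℝ) ≤ 2 ^ p := Real.rpow_nonneg (by norm_num) p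
          nlinarith
  have hsummaj : Summable fun n => 2 ^ p * (x n ^ p + y n ^ p) := (hx.add hy).mul_left _
  have hs1 : Summable fun n => |x n + y n| ^ p :=
    Summable.of_nonneg_of_le (fun n => Real.rpow_nonneg (abs_nonneg _) p)
      (hb _ (fun n => by rw [abs_of_nonneg (by linarith [hx0 n, hy0 n])])) hsummaj
  have hs2 : Summable fun n => |x n - y n| ^ p :=
    Summable.of_nonneg_of_le (fun n => Real.rpow_nonneg (abs_nonneg _) p)
      (hb _ (fun n => by
        rw [abs_le]; constructor <;> [linarith [hx0 n, hy0 n]; linarith [hx0 n, hy0 n]])) hsummaj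
  -- pointwise sum inequality
  have hsum : 2 * ((∑' n, x n ^ p) + ∑' n, y n ^ p) ≤
      (∑' n, |x n + y n| ^ p) + ∑' n, |x n - y n| ^ p := by
    rw [← Summable.tsum_add hx hy, ← tsum_mul_left, ← Summable.tsum_add hs1 hs2]
    refine Summable.tsum_le_tsum (fun n => ?_) (by exact (hx.add hy).mul_left 2) (hs1.add hs2)
    have h := pointwise (hx0 n) (hy0 n) hp
    rw [abs_of_nonneg (by linarith [hx0 n, hy0 n] : (0:ℝ) ≤ x n + y n)]
    exact h
  have hA : 0 ≤ ∑' n, |x n + y n| ^ p :=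
    tsum_nonneg fun n => Real.rpow_nonneg (abs_nonneg _) p
  have hB : 0 ≤ ∑' n, |x n - y n| ^ p :=
    tsum_nonneg fun n => Real.rpow_nonneg (abs_nonneg _) p
  have hC : 0 ≤ ∑' n, x n ^ p := tsum_nonneg fun n => Real.rpow_nonneg (hx0 n) p
  have hD : 0 ≤ ∑' n, y n ^ p := tsum_nonneg fun n => Real.rpow_nonneg (hy0 n) p
  have hxabs : (∑' n, |x n| ^ p) = ∑' n, x n ^ p :=
    tsum_congr fun n => by rw [abs_of_nonneg (hx0 n)]
  have hyabs : (∑' n, |y n| ^ p) = ∑' n, y n ^ p :=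
    tsum_congr fun n => by rw [abs_of_nonneg (hy0 n)]
  rw [ge_iff_le, hxabs, hyabs, ← Real.rpow_mul hA, ← Real.rpow_mul hB,
    ← Real.rpow_mul hC, ← Real.rpow_mul hD]
  have hr : (1:ℝ) ≤ 1 / p * q := by
    rw [div_mul_eq_mul_div, one_mul, le_div_iff₀ hp0]; linarith
  exact key hA hB hC hD hr hsum
end

section
/- Let p ≥ 2 and q = p/(p-1). For all real numbers x, y one has |x+y|^p + |x−y|^p ≤ 2(|x|^q + |y|^q)^(p-1) (scalar Clarkson inequality (1.2)). -/
/-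
Put `q = p / (p - 1)`. After the reductions `x, y ≥ 0`, `y = x t` with `0 ≤ t ≤ 1`, the claim is
`0 ≤ clarksonGap p t := 2 (1 + t^q)^(p-1) - (1 + t)^p - (1 - t)^p`, which vanishes at `t = 0, 1`.
At an interior minimum the derivative vanishes, and substituting this relation turns the gap into
`2 (1 + t^q)^(p-2) - (1 + t)^(p-1) - (1 - t)^(p-1)`, so it suffices to prove this "critical bound".
For `p > 3` it is the inequality for `p - 1` (as `t^((p-1)/(p-2)) ≤ t^q`), whence an induction
on `⌈p⌉`. For `2 ≤ p ≤ 3`, with `r = p - 1 ∈ [1, 2]`, the function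
`2 + 2 (2^(r-1) - 1) t^((r+1)/r) - (1 + t)^r - (1 - t)^r` vanishes at `0` and `1` and first rises,
then falls, hence is nonnegative; concavity of `u ↦ (1 + u)^(r-1)` finishes the critical bound.
-/

open Set Real

lemma rpow_eq_mul_rpow_sub_one {x : ℝ} (hx : x ≠ 0) (a : ℝ) : x ^ a = x * x ^ (a - 1) := by
  rw [rpow_sub_one hx, mul_div_cancel₀ _ hx]

lemma hasDerivAt_one_add_rpow (a : ℝ) {s : ℝ} (h : 1 + s ≠ 0) :
    HasDerivAt (fun s : ℝ => (1 + s) ^ a) (a * (1 + s) ^ (a - 1)) s := by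
  simpa using ((hasDerivAt_id s).const_add 1).rpow_const (p := a) (Or.inl h)

lemma hasDerivAt_one_sub_rpow (a : ℝ) {s : ℝ} (h : 1 - s ≠ 0) :
    HasDerivAt (fun s : ℝ => (1 - s) ^ a) (-(a * (1 - s) ^ (a - 1))) s := by
  simpa using ((hasDerivAt_id s).const_sub 1).rpow_const (p := a) (Or.inl h)

lemma min_le_of_hasDerivAt_mul_sub {f w φ : ℝ → ℝ} {a b K t : ℝ} (hf : ContinuousOn f (Icc a b))
    (hf' : ∀ x ∈ Ioo a b, HasDerivAt f (w x * (K - φ x)) x) (hw : ∀ x ∈ Ioo a b, 0 ≤ w x)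
    (hφ : MonotoneOn φ (Ioo a b)) (ht : t ∈ Icc a b) :
    min (f a) (f b) ≤ f t := by
  by_cases hK : ∀ x ∈ Ioo a t, φ x ≤ K
  · have hIoo : Ioo a t ⊆ Ioo a b := Ioo_subset_Ioo_right ht.2
    have hmono : MonotoneOn f (Icc a t) := by
      refine monotoneOn_of_hasDerivWithinAt_nonneg (convex_Icc a t)
        (hf.mono (Icc_subset_Icc_right ht.2))
        (fun x hx => (hf' x (hIoo (by rwa [interior_Icc] at hx))).hasDerivWithinAt) fun x hx => ?_
      rw [interior_Icc] at hx
      exact mul_nonneg (hw x (hIoo hx)) (sub_nonneg.2 (hK x hx))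
    exact min_le_of_left_le (hmono (left_mem_Icc.2 ht.1) (right_mem_Icc.2 ht.1) ht.1)
  · obtain ⟨s, hs, hKs⟩ := not_forall₂.1 hK
    have hIoo : Ioo t b ⊆ Ioo a b := Ioo_subset_Ioo_left ht.1
    have hanti : AntitoneOn f (Icc t b) := by
      refine antitoneOn_of_hasDerivWithinAt_nonpos (convex_Icc t b)
        (hf.mono (Icc_subset_Icc_left ht.1))
        (fun x hx => (hf' x (hIoo (by rwa [interior_Icc] at hx))).hasDerivWithinAt) fun x hx => ?_
      rw [interior_Icc] at hx
      have hsx : φ s ≤ φ x :=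
        hφ ⟨hs.1, hs.2.trans_le ht.2⟩ (hIoo hx) (hs.2.trans hx.1).le
      exact mul_nonpos_of_nonneg_of_nonpos (hw x (hIoo hx)) (by linarith [not_le.1 hKs])
    exact min_le_of_right_le (hanti (left_mem_Icc.2 ht.2) (right_mem_Icc.2 ht.2) ht.2)

lemma one_add_mul_le_one_add_rpow {θ u : ℝ} (hθ0 : 0 ≤ θ) (hθ1 : θ ≤ 1) (hu0 : 0 ≤ u)
    (hu1 : u ≤ 1) : 1 + (2 ^ θ - 1) * u ≤ (1 + u) ^ θ := by
  have := (concaveOn_rpow hθ0 hθ1).2 (mem_Ici.2 zero_le_one) (mem_Ici.2 zero_le_two)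
    (sub_nonneg.2 hu1) hu0 (by ring)
  simp only [smul_eq_mul, one_rpow, mul_one] at this
  rw [show (1 - u) + u * 2 = 1 + u by ring] at this
  linarith

-- `g s = (1 + s) ^ θ - (1 - s) ^ θ` is convex on `[0, 1)` with `g 0 = 0`, so `g τ ≤ τ * g' τ`.
lemma one_add_rpow_sub_one_sub_rpow_le {θ τ : ℝ} (hθ0 : 0 ≤ θ) (hθ1 : θ ≤ 1) (hτ0 : 0 ≤ τ)
    (hτ1 : τ < 1) :
    (1 + τ) ^ θ - (1 - τ) ^ θ ≤ τ * (θ * ((1 + τ) ^ (θ - 1) + (1 - τ) ^ (θ - 1))) := by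
  set E : ℝ → ℝ := fun s =>
    s * (θ * ((1 + s) ^ (θ - 1) + (1 - s) ^ (θ - 1))) - ((1 + s) ^ θ - (1 - s) ^ θ)
  have hE : ∀ s ∈ Icc 0 τ,
      HasDerivAt E (s * (θ * (θ - 1) * ((1 + s) ^ (θ - 2) - (1 - s) ^ (θ - 2)))) s := by
    intro s hs
    have hp : 1 + s ≠ 0 := by linarith [hs.1]
    have hm : 1 - s ≠ 0 := by linarith [hs.2]
    refine (((hasDerivAt_id s).mul (((hasDerivAt_one_add_rpow (θ - 1) hp).add
      (hasDerivAt_one_sub_rpow (θ - 1) hm)).const_mul θ)).sub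
      ((hasDerivAt_one_add_rpow θ hp).sub (hasDerivAt_one_sub_rpow θ hm))).congr_deriv ?_
    simp only [id, Pi.add_apply, show θ - 1 - 1 = θ - 2 by ring]
    ring
  have hmono : MonotoneOn E (Icc 0 τ) := by
    refine monotoneOn_of_hasDerivWithinAt_nonneg (convex_Icc 0 τ)
      (fun s hs => (hE s hs).continuousAt.continuousWithinAt)
      (fun s hs => (hE s (interior_subset hs)).hasDerivWithinAt) fun s hs => ?_
    rw [interior_Icc] at hs
    have hpow : (1 + s) ^ (θ - 2) ≤ (1 - s) ^ (θ - 2) :=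
      rpow_le_rpow_of_nonpos (by linarith [hs.2]) (by linarith [hs.1]) (by linarith)
    have hθ : θ * (θ - 1) ≤ 0 := mul_nonpos_of_nonneg_of_nonpos hθ0 (by linarith)
    exact mul_nonneg hs.1.le (mul_nonneg_of_nonpos_of_nonpos hθ (by linarith))
  simpa [E] using hmono (left_mem_Icc.2 hτ0) (right_mem_Icc.2 hτ0) hτ0

lemma monotoneOn_one_add_rpow_sub_one_sub_rpow_mul_rpow {θ q : ℝ} (hθ0 : 0 ≤ θ) (hθ1 : θ ≤ 1)
    (hq : q ≤ 2) :
    MonotoneOn (fun τ : ℝ => ((1 + τ) ^ θ - (1 - τ) ^ θ) * τ ^ (1 - q)) (Ioo 0 1) := by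
  have hρ : ∀ τ ∈ Ioo (0 : ℝ) 1, HasDerivAt (fun τ : ℝ => ((1 + τ) ^ θ - (1 - τ) ^ θ) * τ ^ (1 - q))
      ((θ * (1 + τ) ^ (θ - 1) - -(θ * (1 - τ) ^ (θ - 1))) * τ ^ (1 - q)
        + ((1 + τ) ^ θ - (1 - τ) ^ θ) * ((1 - q) * τ ^ (1 - q - 1))) τ := fun τ hτ =>
    ((hasDerivAt_one_add_rpow θ (by linarith [hτ.1])).sub
      (hasDerivAt_one_sub_rpow θ (by linarith [hτ.2]))).mul
      (hasDerivAt_rpow_const (Or.inl hτ.1.ne'))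
  refine monotoneOn_of_hasDerivWithinAt_nonneg (convex_Ioo 0 1)
    (fun τ hτ => (hρ τ hτ).continuousAt.continuousWithinAt)
    (fun τ hτ => (hρ τ (interior_subset hτ)).hasDerivWithinAt) fun τ hτ => ?_
  rw [interior_Ioo] at hτ
  obtain ⟨hτ0, hτ1⟩ := hτ
  have hg : 0 ≤ (1 + τ) ^ θ - (1 - τ) ^ θ :=
    sub_nonneg.2 (rpow_le_rpow (by linarith) (by linarith) hθ0)
  have hA := one_add_rpow_sub_one_sub_rpow_le hθ0 hθ1 hτ0.le hτ1
  have hpow : 0 < τ ^ (1 - q - 1) := rpow_pos_of_pos hτ0 _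
  rw [rpow_eq_mul_rpow_sub_one hτ0.ne' (1 - q)]
  nlinarith [mul_le_mul_of_nonneg_right hA hpow.le, mul_nonneg hg hpow.le]

lemma one_add_rpow_add_one_sub_rpow_le {r t : ℝ} (hr1 : 1 ≤ r) (hr2 : r ≤ 2) (ht : t ∈ Icc 0 1) :
    (1 + t) ^ r + (1 - t) ^ r ≤ 2 + 2 * (2 ^ (r - 1) - 1) * t ^ ((r + 1) / r) := by
  set q := (r + 1) / r
  set c : ℝ := 2 * (2 ^ (r - 1) - 1)
  set h : ℝ → ℝ := fun t => 2 + c * t ^ q - ((1 + t) ^ r + (1 - t) ^ r)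
  have hr0 : 0 ≤ r := by linarith
  have hq0 : 0 ≤ q := by positivity
  have hq2 : q ≤ 2 := by rw [div_le_iff₀ (by linarith)]; linarith
  have h0 : h 0 = 0 := by simp [h, zero_rpow (by positivity : q ≠ 0)]; norm_num
  have h1 : h 1 = 0 := by
    simp [h, c, zero_rpow (by positivity : r ≠ 0), rpow_sub_one two_ne_zero r]
    linarith
  have hcont : ContinuousOn h (Icc 0 1) := by fun_prop (disch := assumption)
  have hderiv : ∀ τ ∈ Ioo (0 : ℝ) 1, HasDerivAt h (τ ^ (q - 1) *
      (c * q - r * (((1 + τ) ^ (r - 1) - (1 - τ) ^ (r - 1)) * τ ^ (1 - q)))) τ := by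
    intro τ hτ
    refine ((((hasDerivAt_rpow_const (p := q) (Or.inl hτ.1.ne')).const_mul c).const_add 2).sub
      ((hasDerivAt_one_add_rpow r (by linarith [hτ.1])).add
        (hasDerivAt_one_sub_rpow r (by linarith [hτ.2])))).congr_deriv ?_
    have hτq : τ ^ (q - 1) * τ ^ (1 - q) = 1 := by
      rw [← rpow_add hτ.1, show q - 1 + (1 - q) = 0 by ring, rpow_zero]
    linear_combination (r * ((1 + τ) ^ (r - 1) - (1 - τ) ^ (r - 1))) * hτq
  have hρ := monotoneOn_one_add_rpow_sub_one_sub_rpow_mul_rpow (θ := r - 1) (by linarith)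
    (by linarith) hq2
  have := min_le_of_hasDerivAt_mul_sub hcont hderiv (fun τ hτ => (rpow_pos_of_pos hτ.1 _).le)
    (fun x hx y hy hxy => mul_le_mul_of_nonneg_left (hρ hx hy hxy) hr0) ht
  rw [h0, h1, min_self] at this
  linarith

noncomputable def clarksonGap (p t : ℝ) : ℝ :=
  2 * (1 + t ^ (p / (p - 1))) ^ (p - 1) - ((1 + t) ^ p + (1 - t) ^ p)

section clarksonGap

variable {p : ℝ}

lemma continuousOn_clarksonGap (hp : 1 < p) : ContinuousOn (clarksonGap p) (Icc 0 1) := by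
  have hp0 : 0 ≤ p := by linarith
  have hp1 : 0 ≤ p - 1 := by linarith
  have hq : 0 ≤ p / (p - 1) := by positivity
  unfold clarksonGap
  fun_prop (disch := assumption)

lemma clarksonGap_zero (hp : 1 < p) : clarksonGap p 0 = 0 := by
  have hq : p / (p - 1) ≠ 0 := (div_pos (by linarith) (by linarith)).ne'
  simp [clarksonGap, zero_rpow hq]
  norm_num

lemma clarksonGap_one (hp : 0 < p) : clarksonGap p 1 = 0 := by
  norm_num [clarksonGap, zero_rpow hp.ne', rpow_sub_one two_ne_zero p]
  ring

lemma hasDerivAt_clarksonGap (hp : 1 < p) {t : ℝ} (ht : t ∈ Ioo 0 1) :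
    HasDerivAt (clarksonGap p) (p * (2 * t ^ (p / (p - 1) - 1) * (1 + t ^ (p / (p - 1))) ^ (p - 2)
      - ((1 + t) ^ (p - 1) - (1 - t) ^ (p - 1)))) t := by
  set q := p / (p - 1)
  have hqp : q * (p - 1) = p := div_mul_cancel₀ p (by linarith)
  have hu : 1 + t ^ q ≠ 0 := by have := rpow_nonneg ht.1.le q; linarith
  refine ((((hasDerivAt_rpow_const (Or.inl ht.1.ne')).const_add 1).rpow_const (p := p - 1)
    (Or.inl hu)).const_mul 2 |>.sub ((hasDerivAt_one_add_rpow p (by linarith [ht.1])).add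
      (hasDerivAt_one_sub_rpow p (by linarith [ht.2])))).congr_deriv ?_
  rw [show p - 1 - 1 = p - 2 by ring]
  linear_combination 2 * t ^ (q - 1) * (1 + t ^ q) ^ (p - 2) * hqp

lemma clarksonGap_eq_of_isCritical {t : ℝ} (ht : t ∈ Ioo 0 1)
    (hcrit : 2 * t ^ (p / (p - 1) - 1) * (1 + t ^ (p / (p - 1))) ^ (p - 2)
      = (1 + t) ^ (p - 1) - (1 - t) ^ (p - 1)) :
    clarksonGap p t
      = 2 * (1 + t ^ (p / (p - 1))) ^ (p - 2) - ((1 + t) ^ (p - 1) + (1 - t) ^ (p - 1)) := by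
  set q := p / (p - 1)
  have hu : 1 + t ^ q ≠ 0 := by have := rpow_nonneg ht.1.le q; linarith
  rw [clarksonGap, rpow_eq_mul_rpow_sub_one hu, show p - 1 - 1 = p - 2 by ring,
    rpow_eq_mul_rpow_sub_one (by linarith [ht.1] : 1 + t ≠ 0) p,
    rpow_eq_mul_rpow_sub_one (by linarith [ht.2] : 1 - t ≠ 0) p]
  linear_combination t * hcrit + 2 * (1 + t ^ q) ^ (p - 2) * rpow_eq_mul_rpow_sub_one ht.1.ne' q

lemma clarksonGap_nonneg_of_critical_bound (hp : 1 < p)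
    (hC : ∀ t ∈ Ioo (0 : ℝ) 1,
      (1 + t) ^ (p - 1) + (1 - t) ^ (p - 1) ≤ 2 * (1 + t ^ (p / (p - 1))) ^ (p - 2))
    {t : ℝ} (ht : t ∈ Icc 0 1) : 0 ≤ clarksonGap p t := by
  obtain ⟨t₀, ht₀, hmin⟩ :=
    isCompact_Icc.exists_isMinOn (nonempty_Icc.2 zero_le_one) (continuousOn_clarksonGap hp)
  refine le_trans ?_ (hmin ht)
  rcases eq_or_lt_of_le ht₀.1 with rfl | h0
  · rw [clarksonGap_zero hp]
  rcases eq_or_lt_of_le ht₀.2 with rfl | h1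
  · rw [clarksonGap_one (by linarith)]
  have hderiv := (hmin.isLocalMin (Icc_mem_nhds h0 h1)).hasDerivAt_eq_zero
    (hasDerivAt_clarksonGap hp ⟨h0, h1⟩)
  rw [clarksonGap_eq_of_isCritical ⟨h0, h1⟩ (by
    linarith [(mul_eq_zero.1 hderiv).resolve_left (by linarith)])]
  linarith [hC t₀ ⟨h0, h1⟩]

lemma critical_bound_of_le_three (hp2 : 2 ≤ p) (hp3 : p ≤ 3) {t : ℝ} (ht : t ∈ Icc 0 1) :
    (1 + t) ^ (p - 1) + (1 - t) ^ (p - 1) ≤ 2 * (1 + t ^ (p / (p - 1))) ^ (p - 2) := by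
  have hu0 : 0 ≤ t ^ (p / (p - 1)) := rpow_nonneg ht.1 _
  have hu1 : t ^ (p / (p - 1)) ≤ 1 := rpow_le_one ht.1 ht.2 (div_nonneg (by linarith) (by linarith))
  have hchord := one_add_mul_le_one_add_rpow (θ := p - 2) (by linarith) (by linarith) hu0 hu1
  calc (1 + t) ^ (p - 1) + (1 - t) ^ (p - 1)
      ≤ 2 + 2 * (2 ^ (p - 1 - 1) - 1) * t ^ ((p - 1 + 1) / (p - 1)) :=
        one_add_rpow_add_one_sub_rpow_le (by linarith) (by linarith) ht
    _ = 2 * (1 + (2 ^ (p - 2) - 1) * t ^ (p / (p - 1))) := by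
        rw [sub_add_cancel, show p - 1 - 1 = p - 2 by ring]; ring
    _ ≤ 2 * (1 + t ^ (p / (p - 1))) ^ (p - 2) := by linarith

lemma critical_bound_of_clarksonGap_sub_one_nonneg (hp : 2 < p) {t : ℝ} (ht : t ∈ Icc 0 1)
    (h : 0 ≤ clarksonGap (p - 1) t) :
    (1 + t) ^ (p - 1) + (1 - t) ^ (p - 1) ≤ 2 * (1 + t ^ (p / (p - 1))) ^ (p - 2) := by
  rw [clarksonGap, show p - 1 - 1 = p - 2 by ring] at h
  have hexp : t ^ ((p - 1) / (p - 2)) ≤ t ^ (p / (p - 1)) := by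
    refine rpow_le_rpow_of_exponent_ge' ht.1 ht.2 (div_nonneg (by linarith) (by linarith)) ?_
    rw [div_le_div_iff₀ (by linarith) (by linarith)]
    nlinarith
  have hbase : (1 + t ^ ((p - 1) / (p - 2))) ^ (p - 2) ≤ (1 + t ^ (p / (p - 1))) ^ (p - 2) :=
    rpow_le_rpow (by linarith [rpow_nonneg ht.1 ((p - 1) / (p - 2))]) (by linarith) (by linarith)
  linarith

lemma clarksonGap_nonneg (hp : 2 ≤ p) {t : ℝ} (ht : t ∈ Icc 0 1) : 0 ≤ clarksonGap p t := by
  obtain ⟨n, hn⟩ := exists_nat_ge p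
  induction n generalizing p t with
  | zero => norm_num at hn; linarith
  | succ n ih =>
    refine clarksonGap_nonneg_of_critical_bound (by linarith) (fun s hs => ?_) ht
    have hs' : s ∈ Icc 0 1 := Ioo_subset_Icc_self hs
    rcases le_or_gt p 3 with hp3 | hp3
    · exact critical_bound_of_le_three hp hp3 hs'
    · exact critical_bound_of_clarksonGap_sub_one_nonneg (by linarith) hs'
        (ih (by linarith) hs' (by push_cast at hn; linarith))

end clarksonGap

lemma add_rpow_add_sub_rpow_le {p a b : ℝ} (hp : 2 ≤ p) (hb : 0 ≤ b) (hba : b ≤ a) :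
    (a + b) ^ p + (a - b) ^ p ≤ 2 * (a ^ (p / (p - 1)) + b ^ (p / (p - 1))) ^ (p - 1) := by
  set q := p / (p - 1)
  rcases (hb.trans hba).eq_or_lt with rfl | ha
  · obtain rfl : b = 0 := le_antisymm hba hb
    simp [zero_rpow (by linarith : p ≠ 0)]
    positivity
  obtain ⟨t, ht, rfl⟩ : ∃ t ∈ Icc (0 : ℝ) 1, b = a * t :=
    ⟨b / a, ⟨div_nonneg hb ha.le, div_le_one_of_le₀ hba ha.le⟩, (mul_div_cancel₀ b ha.ne').symm⟩
  have hgap := mul_le_mul_of_nonneg_left (sub_nonneg.1 (clarksonGap_nonneg hp ht))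
    (rpow_nonneg ha.le p)
  rw [← mul_one_add, ← mul_one_sub, mul_rpow ha.le (by linarith [ht.1]),
    mul_rpow ha.le (by linarith [ht.2]), mul_rpow ha.le ht.1, ← mul_one_add,
    mul_rpow (rpow_nonneg ha.le q) (by linarith [rpow_nonneg ht.1 q]), ← rpow_mul ha.le,
    div_mul_cancel₀ p (by linarith)]
  linarith

theorem abs_add_rpow_add_abs_sub_rpow_le {p : ℝ} (hp : 2 ≤ p) (x y : ℝ) :
    |x + y| ^ p + |x - y| ^ p ≤ 2 * (|x| ^ (p / (p - 1)) + |y| ^ (p / (p - 1))) ^ (p - 1) := by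
  wlog hy : 0 ≤ y generalizing y
  · simpa [← sub_eq_add_neg, add_comm (|x - y| ^ p), abs_neg] using this (-y) (by linarith)
  wlog hx : 0 ≤ x generalizing x
  · simpa [add_comm (-x), ← sub_eq_add_neg, abs_sub_comm, add_comm (|x + y| ^ p), abs_neg,
      add_comm y x] using this (-x) (by linarith)
  wlog hyx : y ≤ x generalizing x y
  · simpa [add_comm, abs_sub_comm] using this x hx y hy (by linarith)
  rw [abs_of_nonneg (by linarith : 0 ≤ x + y), abs_of_nonneg (sub_nonneg.2 hyx), abs_of_nonneg hx,
    abs_of_nonneg hy]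
  exact add_rpow_add_sub_rpow_le hp hy hyx

theorem stmt15 (p q : ℝ) (hp : 2 ≤ p) (hq : q = p / (p - 1)) (x y : ℝ) :
    |x + y| ^ p + |x - y| ^ p ≤ 2 * (|x| ^ q + |y| ^ q) ^ (p - 1) := by
  subst hq
  exact abs_add_rpow_add_abs_sub_rpow_le hp x y
end
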